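/- With the bipartite construction of G and A: the normalizing constant of the spanning-tree DPP equals the number of perfect matchings of the bipartite graph; that is, Σ_{S ⊆ F ⊕ F, S induces a spanning tree of G} det(A_S) equals the cardinality of {π : Equiv.Perm (Fin n) | ∀ i, (i, π i) ∈ F}. -/

import Mathlib

open scoped Classical

/-- The principal minor of `A` on the index set `S` (equal to `1` when `S = ∅`). -/
noncomputable def principalMinor {ι : Type*} [DecidableEq ι]
    (A : Matrix ι ι ℝ) (S : Finset ι) : ℝ :=
  (A.submatrix (fun i : ↥S => (i : ι)) (fun i : ↥S => (i : ι))).det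

/-- The edge of the graph `G` associated with an edge index in `F ⊕ F`:
the left edge `{u_i, u_i w_j}` and the right edge `{u_i w_j, u_{i+1}}`. -/
def bipEdge {n : ℕ} (F : Finset (Fin n × Fin n)) :
    (↥F ⊕ ↥F) → Sym2 (Fin (n + 1) ⊕ ↥F)
  | Sum.inl e => s(Sum.inl (e : Fin n × Fin n).1.castSucc, Sum.inr e)
  | Sum.inr e => s(Sum.inr e, Sum.inl (e : Fin n × Fin n).1.succ)

/-- The spanning subgraph of `G` whose edges are those indexed by `S ⊆ F ⊕ F`. -/
def bipSubgraph {n : ℕ} (F : Finset (Fin n × Fin n)) (S : Finset (↥F ⊕ ↥F)) :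
    SimpleGraph (Fin (n + 1) ⊕ ↥F) :=
  SimpleGraph.fromEdgeSet (bipEdge F '' ↑S)

/-- The matrix `A` of the construction: the left-left block records equality of the
second coordinates, the right-right block is the identity, the off-diagonal blocks vanish. -/
def bipMatrix {n : ℕ} (F : Finset (Fin n × Fin n)) : Matrix (↥F ⊕ ↥F) (↥F ⊕ ↥F) ℝ :=
  Matrix.of fun p q =>
    match p, q with
    | Sum.inl e₁, Sum.inl e₂ =>
        if (e₁ : Fin n × Fin n).2 = (e₂ : Fin n × Fin n).2 then 1 else 0
    | Sum.inr e, Sum.inr e' => if e = e' then 1 else 0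
    | _, _ => 0

/-!
The matrix `A` is the Gram-type matrix `[κ p = κ q]` of the map `κ` (`bipKey`) sending a left
edge to its `W`-endpoint and a right edge to itself, so `det A_S` is `1` when `κ` is injective on
`S` and `0` otherwise. A spanning tree has `n + m` edges; if its left edges have distinct
`W`-endpoints there are at most `n` of them, hence exactly `n`, and all `m` right edges are
present. Two left edges at the same `u_i` would then close a 4-cycle through `u_{i+1}`, so the
left edges form a perfect matching. Conversely a perfect matching together with all right edges
is a spanning tree.
-/

open Finset

theorem SimpleGraph.IsAcyclic.eq_of_adj_of_adj {V : Type*} {G : SimpleGraph V}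
    (hG : G.IsAcyclic) {u v w w' : V} (huv : u ≠ v) (huw : G.Adj u w) (hwv : G.Adj w v)
    (huw' : G.Adj u w') (hw'v : G.Adj w' v) : w = w' := by
  have hp : (SimpleGraph.Walk.cons huw (.cons hwv .nil)).IsPath := by
    simp [huv, huw.ne, hwv.ne]
  have hq : (SimpleGraph.Walk.cons huw' (.cons hw'v .nil)).IsPath := by
    simp [huv, huw'.ne, hw'v.ne]
  simpa using congrArg (fun p : G.Path u v => p.1.snd)
    ((hG.subsingleton_path u v).elim ⟨_, hp⟩ ⟨_, hq⟩)

theorem Matrix.det_of_ite_eq {ι κ R : Type*} [Fintype ι] [DecidableEq ι] [DecidableEq κ]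
    [CommRing R] (f : ι → κ) :
    (Matrix.of fun i j => if f i = f j then (1 : R) else 0).det =
      if Function.Injective f then 1 else 0 := by
  split_ifs with hf
  · convert Matrix.det_one (n := ι) (R := R)
    ext i j
    simp [Matrix.one_apply, hf.eq_iff]
  · obtain ⟨i, j, hfij, hij⟩ : ∃ i j, f i = f j ∧ i ≠ j := by
      simpa [Function.Injective] using hf
    exact Matrix.det_zero_of_row_eq hij (funext fun k => by simp [hfij])

theorem principalMinor_of_ite_eq {ι κ : Type*} [DecidableEq ι] [DecidableEq κ] (f : ι → κ)
    (S : Finset ι) :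
    principalMinor (Matrix.of fun i j => if f i = f j then (1 : ℝ) else 0) S =
      if Set.InjOn f S then 1 else 0 := by
  simp only [principalMinor, Set.injOn_iff_injective]
  exact Matrix.det_of_ite_eq _

theorem Finset.exists_equiv_of_injOn {ι α β : Type*} [Fintype α] [Fintype β] {L : Finset ι}
    {f : ι → α} {g : ι → β} (hf : Set.InjOn f L) (hg : Set.InjOn g L)
    (hα : #L = Fintype.card α) (hβ : #L = Fintype.card β) :
    ∃ π : α ≃ β, ∀ a, ∃ x ∈ L, f x = a ∧ g x = π a := by
  let eα := Equiv.ofBijective _ <|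
    (Fintype.bijective_iff_injective_and_card _).mpr ⟨hf.injective, by simpa using hα⟩
  let eβ := Equiv.ofBijective _ <|
    (Fintype.bijective_iff_injective_and_card _).mpr ⟨hg.injective, by simpa using hβ⟩
  refine ⟨eα.symm.trans eβ, fun a => ⟨eα.symm a, (eα.symm a).2, ?_, rfl⟩⟩
  exact eα.apply_symm_apply a

section Bipartite

variable {n : ℕ} (F : Finset (Fin n × Fin n))

theorem bipEdge_injective : Function.Injective (bipEdge F) := by
  have hne (i : Fin n) : i.castSucc ≠ i.succ := Fin.castSucc_lt_succ.ne
  rintro (e | e) (e' | e') h <;>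
    simp only [bipEdge, Sym2.eq_iff, Sum.inl.injEq, Sum.inr.injEq, reduceCtorEq, and_false,
      false_or, or_false] at h
  · rw [h.2]
  · exact absurd (h.2 ▸ h.1) (hne _)
  · exact absurd (h.1 ▸ h.2).symm (hne _)
  · rw [h.1]

theorem not_isDiag_bipEdge (p : ↥F ⊕ ↥F) : ¬ (bipEdge F p).IsDiag := by
  cases p <;> simp [bipEdge]

theorem card_edgeSet_bipSubgraph (S : Finset (↥F ⊕ ↥F)) :
    Nat.card (bipSubgraph F S).edgeSet = #S := by
  have : (bipSubgraph F S).edgeSet = bipEdge F '' S := by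
    rw [bipSubgraph, SimpleGraph.edgeSet_fromEdgeSet, sdiff_eq_left, Set.disjoint_left]
    rintro _ ⟨p, -, rfl⟩
    exact not_isDiag_bipEdge F p
  rw [this, Nat.card_image_of_injective (bipEdge_injective F)]
  simp

theorem isTree_bipSubgraph_iff (S : Finset (↥F ⊕ ↥F)) :
    (bipSubgraph F S).IsTree ↔ (bipSubgraph F S).Connected ∧ #S = n + #F := by
  rw [SimpleGraph.isTree_iff_connected_and_card, card_edgeSet_bipSubgraph]
  simp only [Nat.card_eq_fintype_card, Fintype.card_sum, Fintype.card_fin, Fintype.card_coe]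
  exact and_congr_right fun _ => by omega

variable {F}

theorem bipSubgraph_adj_inl {S : Finset (↥F ⊕ ↥F)} {e : ↥F} (he : Sum.inl e ∈ S) :
    (bipSubgraph F S).Adj (Sum.inl (e : Fin n × Fin n).1.castSucc) (Sum.inr e) := by
  rw [bipSubgraph, SimpleGraph.fromEdgeSet_adj]
  exact ⟨⟨Sum.inl e, he, rfl⟩, by simp⟩

theorem bipSubgraph_adj_inr {S : Finset (↥F ⊕ ↥F)} {e : ↥F} (he : Sum.inr e ∈ S) :
    (bipSubgraph F S).Adj (Sum.inr e) (Sum.inl (e : Fin n × Fin n).1.succ) := by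
  rw [bipSubgraph, SimpleGraph.fromEdgeSet_adj]
  exact ⟨⟨Sum.inr e, he, rfl⟩, by simp⟩

theorem bipSubgraph_connected {S : Finset (↥F ⊕ ↥F)} (hR : ∀ e : ↥F, Sum.inr e ∈ S)
    (hL : ∀ i : Fin n, ∃ e : ↥F, (e : Fin n × Fin n).1 = i ∧ Sum.inl e ∈ S) :
    (bipSubgraph F S).Connected := by
  have hu (i : Fin (n + 1)) : (bipSubgraph F S).Reachable (Sum.inl 0) (Sum.inl i) := by
    induction i using Fin.induction with
    | zero => rfl
    | succ i ih =>
      obtain ⟨e, rfl, he⟩ := hL i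
      exact ih.trans <|
        (bipSubgraph_adj_inl he).reachable.trans (bipSubgraph_adj_inr (hR e)).reachable
  have hv : ∀ v, (bipSubgraph F S).Reachable (Sum.inl 0) v
    | Sum.inl i => hu i
    | Sum.inr e => (hu _).trans (bipSubgraph_adj_inr (hR e)).symm.reachable
  exact SimpleGraph.connected_iff_exists_forall_reachable _ |>.mpr ⟨_, hv⟩

variable (F)

def bipKey : ↥F ⊕ ↥F → Fin n ⊕ ↥F
  | Sum.inl e => Sum.inl (e : Fin n × Fin n).2
  | Sum.inr e => Sum.inr e

theorem bipMatrix_eq_of_bipKey :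
    bipMatrix F = Matrix.of fun p q => if bipKey F p = bipKey F q then 1 else 0 := by
  ext (e | e) (e' | e') <;> simp [bipMatrix, bipKey]

def matchingTree (π : Equiv.Perm (Fin n)) : Finset (↥F ⊕ ↥F) :=
  (univ.filter fun e : ↥F => π (e : Fin n × Fin n).1 = (e : Fin n × Fin n).2).disjSum univ

theorem injOn_bipKey_matchingTree (π : Equiv.Perm (Fin n)) :
    Set.InjOn (bipKey F) (matchingTree F π) := by
  rintro (e | e) he (e' | e') he' h <;>
    simp only [bipKey, Sum.inl.injEq, Sum.inr.injEq, reduceCtorEq] at h ⊢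
  · rw [mem_coe, matchingTree, inl_mem_disjSum, mem_filter] at he he'
    exact Subtype.ext (Prod.ext (π.injective (by rw [he.2, he'.2, h])) h)
  · exact h

variable {F}

theorem isTree_matchingTree {π : Equiv.Perm (Fin n)} (hπ : ∀ i, (i, π i) ∈ F) :
    (bipSubgraph F (matchingTree F π)).IsTree := by
  rw [isTree_bipSubgraph_iff]
  refine ⟨bipSubgraph_connected (by simp [matchingTree])
    fun i => ⟨⟨(i, π i), hπ i⟩, rfl, by simp [matchingTree]⟩, ?_⟩
  rw [matchingTree, card_disjSum, card_univ, Fintype.card_coe]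
  congr 1
  refine .trans (card_nbij' (t := univ) (fun e => (e : Fin n × Fin n).1)
    (fun i => ⟨(i, π i), hπ i⟩) (fun _ _ => mem_univ _) (fun i _ => by simp) (fun e he => ?_)
    fun _ _ => rfl) (card_fin n)
  exact Subtype.ext (Prod.ext rfl (mem_filter.mp he).2)

theorem matchingTree_injOn :
    Set.InjOn (matchingTree F) {π | ∀ i, (i, π i) ∈ F} := by
  intro π hπ π' _ h
  refine Equiv.ext fun i => ?_
  have hmem : Sum.inl ⟨(i, π i), hπ i⟩ ∈ matchingTree F π := by simp [matchingTree]
  rw [h] at hmem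
  simpa [matchingTree, eq_comm] using hmem

theorem exists_matchingTree_eq {S : Finset (↥F ⊕ ↥F)} (hT : (bipSubgraph F S).IsTree)
    (hS : Set.InjOn (bipKey F) S) :
    ∃ π : Equiv.Perm (Fin n), (∀ i, (i, π i) ∈ F) ∧ matchingTree F π = S := by
  have hcard : #S = n + #F := ((isTree_bipSubgraph_iff F S).mp hT).2
  have hsnd : Set.InjOn (fun e : ↥F => (e : Fin n × Fin n).2) S.toLeft :=
    fun e he e' he' h => Sum.inl_injective (hS (mem_toLeft.mp he) (mem_toLeft.mp he')
      (congrArg Sum.inl h))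
  have hL : #S.toLeft ≤ n := by
    simpa using card_le_card_of_injOn _ (fun _ _ => mem_univ _) hsnd
  have hR : #S.toRight ≤ #F := by simpa using card_le_univ S.toRight
  have hLR := card_toLeft_add_card_toRight (u := S)
  have hLn : #S.toLeft = n := by omega
  have hRuniv : S.toRight = univ := eq_univ_of_card _ (by rw [Fintype.card_coe]; omega)
  have hinr (e : ↥F) : Sum.inr e ∈ S := mem_toRight.mp (hRuniv ▸ mem_univ e)
  -- two left edges at `u_i` would close the 4-cycle `u_i, e, u_{i+1}, e'`
  have hfst : Set.InjOn (fun e : ↥F => (e : Fin n × Fin n).1) S.toLeft := by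
    intro e he e' he' h
    refine Sum.inr_injective (hT.isAcyclic.eq_of_adj_of_adj ?_
      (bipSubgraph_adj_inl (mem_toLeft.mp he)) (bipSubgraph_adj_inr (hinr e)) ?_ ?_)
    · simpa using Fin.castSucc_lt_succ.ne
    · simpa [h] using bipSubgraph_adj_inl (mem_toLeft.mp he')
    · simpa [h] using bipSubgraph_adj_inr (hinr e')
  obtain ⟨π, hπ⟩ := exists_equiv_of_injOn hfst hsnd (by simp [hLn]) (by simp [hLn])
  refine ⟨π, fun i => ?_, ?_⟩
  · obtain ⟨e, -, rfl, he⟩ := hπ i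
    exact he ▸ e.2
  rw [matchingTree, disjSum_eq_iff, hRuniv]
  refine ⟨?_, rfl⟩
  ext e
  obtain ⟨x, hx, hfx, hgx⟩ := hπ (e : Fin n × Fin n).1
  simp only [mem_filter, mem_univ, true_and]
  constructor
  · intro he
    exact Subtype.ext (Prod.ext hfx (hgx.trans he)) ▸ hx
  · intro he
    exact hfst hx he hfx ▸ hgx.symm

theorem card_isTree_injOn_bipKey :
    #(univ.filter fun S : Finset (↥F ⊕ ↥F) =>
        (bipSubgraph F S).IsTree ∧ Set.InjOn (bipKey F) S) =
      #(univ.filter fun π : Equiv.Perm (Fin n) => ∀ i, (i, π i) ∈ F) := by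
  symm
  refine card_bij (fun π _ => matchingTree F π) (fun π hπ => ?_)
    (fun π hπ π' hπ' h => matchingTree_injOn (mem_filter.mp hπ).2 (mem_filter.mp hπ').2 h)
    (fun S hS => ?_)
  · simp only [mem_filter, mem_univ, true_and] at hπ ⊢
    exact ⟨isTree_matchingTree hπ, injOn_bipKey_matchingTree F π⟩
  · obtain ⟨hT, hS⟩ := (mem_filter.mp hS).2
    obtain ⟨π, hπ, rfl⟩ := exists_matchingTree_eq hT hS
    exact ⟨π, by simpa using hπ, rfl⟩

end Bipartite

theorem bip_spanningTreeDPP_eq_card_perfectMatchings_general {n : ℕ}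
    (F : Finset (Fin n × Fin n)) :
    ∑ S ∈ Finset.univ.filter (fun S : Finset (↥F ⊕ ↥F) => (bipSubgraph F S).IsTree),
        principalMinor (bipMatrix F) S
      = ((Finset.univ.filter
          (fun π : Equiv.Perm (Fin n) => ∀ i, (i, π i) ∈ F)).card : ℝ) := by
  simp only [bipMatrix_eq_of_bipKey, principalMinor_of_ite_eq, sum_boole, filter_filter,
    card_isTree_injOn_bipKey]

/-- The normalizing constant of the spanning-tree DPP given by `A` and `G` equals the
number of perfect matchings of the bipartite graph `(U, W; F)`. -/
theorem bip_spanningTreeDPP_eq_card_perfectMatchings {n : ℕ} (hn : 1 ≤ n)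
    (F : Finset (Fin n × Fin n)) :
    ∑ S ∈ Finset.univ.filter (fun S : Finset (↥F ⊕ ↥F) => (bipSubgraph F S).IsTree),
        principalMinor (bipMatrix F) S
      = ((Finset.univ.filter
          (fun π : Equiv.Perm (Fin n) => ∀ i, (i, π i) ∈ F)).card : ℝ) :=
  bip_spanningTreeDPP_eq_card_perfectMatchings_general F
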